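/- arXiv:2211.06126 — 6 statements merged into one kernel-verified Lean document; each statement's English description precedes it below -/
import Mathlib

section
/- Let G be a locally compact Hausdorff étale groupoid. If G is effective (the interior of the isotropy bundle equals the unit space), then G is jointly effective at every unit x: for any finitely many nontrivial isotropy elements γ₁,…,γₙ at x and any open bisections B₁,…,Bₙ ⊆ G \ G⁰ with γᵢ ∈ Bᵢ, there exists y ∈ ⋂ᵢ s(Bᵢ) such that r(Bᵢ y) ≠ y for all i. -/
open Set

/-- A locally compact Hausdorff étale groupoid, modelled as a type of arrows `G`
with a distinguished set of units, source/range/inverse maps, and a globally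
defined multiplication that is only meaningful on composable pairs. -/
structure EtaleGroupoid (G : Type*) [TopologicalSpace G] where
  src : G → G
  rng : G → G
  inv : G → G
  mul : G → G → G
  units : Set G
  src_mem : ∀ γ, src γ ∈ units
  rng_mem : ∀ γ, rng γ ∈ units
  src_unit : ∀ x ∈ units, src x = x
  rng_unit : ∀ x ∈ units, rng x = x
  src_mul : ∀ γ η, src γ = rng η → src (mul γ η) = src η
  rng_mul : ∀ γ η, src γ = rng η → rng (mul γ η) = rng γ
  mul_assoc : ∀ γ η ζ, src γ = rng η → src η = rng ζ →
    mul (mul γ η) ζ = mul γ (mul η ζ)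
  src_inv : ∀ γ, src (inv γ) = rng γ
  rng_inv : ∀ γ, rng (inv γ) = src γ
  inv_inv : ∀ γ, inv (inv γ) = γ
  mul_inv_self : ∀ γ, mul γ (inv γ) = rng γ
  inv_self_mul : ∀ γ, mul (inv γ) γ = src γ
  mul_unit : ∀ γ, mul γ (src γ) = γ
  unit_mul : ∀ γ, mul (rng γ) γ = γ
  continuous_inv : Continuous inv
  continuous_mul : ContinuousOn (fun p : G × G => mul p.1 p.2) {p | src p.1 = rng p.2}
  units_open : IsOpen units
  etale_src : IsLocalHomeomorph src
  etale_rng : IsLocalHomeomorph rng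

namespace EtaleGroupoid

variable {G : Type*} [TopologicalSpace G] (𝒢 : EtaleGroupoid G)

/-- The isotropy bundle `𝐼(G) = {γ : r γ = s γ}`. -/
def iso : Set G := {γ | 𝒢.rng γ = 𝒢.src γ}

/-- The source fibre over a unit `x`. -/
def srcFiber (x : G) : Set G := {γ | 𝒢.src γ = x}

/-- A subset of the unit space is invariant if sources in it force ranges in it. -/
def Invariant (U : Set G) : Prop := ∀ γ : G, 𝒢.src γ ∈ U → 𝒢.rng γ ∈ U

/-- The reduction `G|_U` of `G` to a set of units `U`. -/
def restrict (U : Set G) : Set G := {γ | 𝒢.rng γ ∈ U ∧ 𝒢.src γ ∈ U}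

/-- A bisection: both the source and the range map are injective on `B`. -/
def IsBisection (B : Set G) : Prop :=
  (∀ γ ∈ B, ∀ η ∈ B, 𝒢.src γ = 𝒢.src η → γ = η) ∧
  (∀ γ ∈ B, ∀ η ∈ B, 𝒢.rng γ = 𝒢.rng η → γ = η)

/-- `G` is effective at the unit `x` if `𝐼°(G) ∩ G_x = {x}`. -/
def EffectiveAt (x : G) : Prop := interior 𝒢.iso ∩ 𝒢.srcFiber x = {x}

/-- `G` is jointly effective at the unit `x`. -/
def JointlyEffectiveAt (x : G) : Prop :=
  ∀ (n : ℕ) (γ : Fin n → G) (B : Fin n → Set G),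
    (∀ i, γ i ∈ 𝒢.iso ∧ 𝒢.src (γ i) = x ∧ γ i ≠ x) →
    (∀ i, IsOpen (B i) ∧ 𝒢.IsBisection (B i) ∧ B i ∩ 𝒢.units = ∅ ∧ γ i ∈ B i) →
    ∃ y ∈ 𝒢.units, (∀ i, ∃ β ∈ B i, 𝒢.src β = y) ∧
      (∀ i, ∀ β ∈ B i, 𝒢.src β = y → 𝒢.rng β ≠ y)

end EtaleGroupoid

/-- an effective groupoid is jointly effective at every unit. -/
theorem jointlyEffective_of_effective
    {G : Type*} [TopologicalSpace G] [T2Space G] [LocallyCompactSpace G]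
    (𝒢 : EtaleGroupoid G) (heff : interior 𝒢.iso = 𝒢.units) :
    ∀ x ∈ 𝒢.units, 𝒢.JointlyEffectiveAt x := by
  intro x hx n γ B hγ hB
  have hsrc_cont : Continuous 𝒢.src := 𝒢.etale_src.continuous
  have hrng_cont : Continuous 𝒢.rng := 𝒢.etale_rng.continuous
  have hiso_closed : IsClosed 𝒢.iso := isClosed_eq hrng_cont hsrc_cont
  have hopenmap : IsOpenMap 𝒢.src := 𝒢.etale_src.isOpenMap
  set O : Fin n → Set G := fun i => 𝒢.src '' (B i \ 𝒢.iso) with hOdef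
  have hOopen : ∀ i, IsOpen (O i) := fun i =>
    hopenmap _ ((hB i).1.sdiff hiso_closed)
  -- the source image of `B i ∩ iso` has empty interior
  have hE : ∀ i, interior (𝒢.src '' (B i ∩ 𝒢.iso)) = ∅ := by
    intro i
    by_contra h
    obtain ⟨w, hw⟩ := Set.nonempty_iff_ne_empty.mpr h
    obtain ⟨β, ⟨hβB, hβiso⟩, hβw⟩ := interior_subset hw
    have hUopen : IsOpen (B i ∩ 𝒢.src ⁻¹' interior (𝒢.src '' (B i ∩ 𝒢.iso))) :=
      (hB i).1.inter (isOpen_interior.preimage hsrc_cont)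
    have hUsub : B i ∩ 𝒢.src ⁻¹' interior (𝒢.src '' (B i ∩ 𝒢.iso)) ⊆ 𝒢.iso := by
      rintro η ⟨hη, hη2⟩
      obtain ⟨β', ⟨hβ'B, hβ'iso⟩, hβ'⟩ := interior_subset hη2
      have heq : η = β' := (hB i).2.1.1 η hη β' hβ'B hβ'.symm
      rw [heq]; exact hβ'iso
    have hβU : β ∈ B i ∩ 𝒢.src ⁻¹' interior (𝒢.src '' (B i ∩ 𝒢.iso)) := by
      refine ⟨hβB, Set.mem_preimage.mpr ?_⟩
      rw [hβw]; exact hw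
    have hβint : β ∈ interior 𝒢.iso :=
      interior_maximal hUsub hUopen hβU
    rw [heff] at hβint
    have : β ∈ B i ∩ 𝒢.units := ⟨hβB, hβint⟩
    rw [(hB i).2.2.1] at this
    exact this
  -- iteratively shrink an open set to avoid the bad sets
  have key : ∀ k : ℕ, ∃ V : Set G, IsOpen V ∧ V.Nonempty ∧ V ⊆ 𝒢.units ∧
      (∀ i : Fin n, V ⊆ 𝒢.src '' B i) ∧ (∀ i : Fin n, (i : ℕ) < k → V ⊆ O i) := by
    intro k
    induction k with
    | zero =>
      refine ⟨𝒢.units ∩ ⋂ i, 𝒢.src '' B i, ?_, ⟨x, ?_⟩, ?_, ?_, ?_⟩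
      · exact 𝒢.units_open.inter (isOpen_iInter_of_finite fun i => hopenmap _ (hB i).1)
      · refine ⟨hx, Set.mem_iInter.mpr fun i => ⟨γ i, (hB i).2.2.2, (hγ i).2.1⟩⟩
      · exact Set.inter_subset_left
      · intro i y hy
        exact Set.mem_iInter.mp hy.2 i
      · intro i hi; omega
    | succ k ih =>
      obtain ⟨V, hVo, hVne, hVu, hVs, hVO⟩ := ih
      by_cases hk : k < n
      · set i₀ : Fin n := ⟨k, hk⟩
        refine ⟨V ∩ O i₀, hVo.inter (hOopen i₀), ?_, fun y hy => hVu hy.1,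
          fun i y hy => hVs i hy.1, ?_⟩
        · by_contra hne
          rw [Set.not_nonempty_iff_eq_empty] at hne
          have hsub : V ⊆ 𝒢.src '' (B i₀ ∩ 𝒢.iso) := by
            intro y hy
            obtain ⟨β, hβ, hβy⟩ := hVs i₀ hy
            by_cases hβiso : β ∈ 𝒢.iso
            · exact ⟨β, ⟨hβ, hβiso⟩, hβy⟩
            · exfalso
              have : y ∈ V ∩ O i₀ := ⟨hy, ⟨β, ⟨hβ, hβiso⟩, hβy⟩⟩
              rw [hne] at this; exact this
          have := interior_maximal hsub hVo
          rw [hE i₀] at this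
          exact Set.not_nonempty_empty (hVne.mono this)
        · intro i hi y hy
          rcases Nat.lt_succ_iff_lt_or_eq.mp hi with h | h
          · exact hVO i h hy.1
          · have : i = i₀ := Fin.ext h
            rw [this]; exact hy.2
      · refine ⟨V, hVo, hVne, hVu, hVs, fun i hi => hVO i ?_⟩
        have := i.isLt; omega
  obtain ⟨V, hVo, ⟨y, hy⟩, hVu, hVs, hVO⟩ := key n
  refine ⟨y, hVu hy, fun i => hVs i hy, ?_⟩
  intro i β hβ hβs hβr
  have hyO : y ∈ O i := hVO i i.isLt hy
  obtain ⟨β', ⟨hβ'B, hβ'iso⟩, hβ'y⟩ := hyO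
  have : β = β' := (hB i).2.1.1 β hβ β' hβ'B (by rw [hβs, hβ'y])
  apply hβ'iso
  rw [← this]
  show 𝒢.rng β = 𝒢.src β
  rw [hβs, hβr]
end

section
/- Let G be a Hausdorff étale groupoid in which every nontrivial isotropy group is infinite cyclic. Then G is jointly effective at every unit at which it is effective. -/
open Set

namespace EtaleGroupoid

variable {G : Type*} [TopologicalSpace G]

/-- `n`-th power of an arrow (meaningful for isotropy arrows). -/
def npow (𝒢 : EtaleGroupoid G) (γ : G) : ℕ → G
  | 0 => 𝒢.rng γ
  | n + 1 => 𝒢.mul γ (𝒢.npow γ n)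

/-- Integer power of an arrow (meaningful for isotropy arrows). -/
def zpow (𝒢 : EtaleGroupoid G) (γ : G) : ℤ → G
  | Int.ofNat n => 𝒢.npow γ n
  | Int.negSucc n => 𝒢.npow (𝒢.inv γ) (n + 1)

/-- The isotropy group at a unit `x`. -/
def isoGrp (𝒢 : EtaleGroupoid G) (x : G) : Set G :=
  {γ | 𝒢.src γ = x ∧ 𝒢.rng γ = x}

end EtaleGroupoid

/-!
Let `γ₀` generate the isotropy at `x`, so that `γᵢ = γ₀ ^ Nᵢ` with `Nᵢ ≠ 0`. An open bisection
through `γ₀` induces a partial homeomorphism `Φ` of the unit space fixing `x`, and its `Nᵢ`-th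
power is an open bisection through `γᵢ`, which near `x` agrees with `Bᵢ`. If joint effectiveness
failed, every unit `y` near `x` would satisfy `r (Bᵢ y) = y` for some `i`, so `Φ^[|Nᵢ|] y = y` and
hence `Φ^[K] y = y` for `K = ∏ |Nᵢ|`. The `K`-th power of the bisection near `x` then consists of
isotropy, so `γ₀ ^ K` lies in the interior of the isotropy, and effectiveness forces `γ₀ ^ K = x`,
contradicting `K ≠ 0`.
-/

section Iterate

variable {X : Type*} [TopologicalSpace X] {f : X → X} {s : Set X}

theorem ContinuousOn.continuousOn_iterate (hf : ContinuousOn f s) (k : ℕ) :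
    ContinuousOn f^[k] {y | ∀ j < k, f^[j] y ∈ s} := by
  induction k with
  | zero => exact continuousOn_id
  | succ k ih =>
    rw [Function.iterate_succ']
    exact hf.comp (ih.mono fun y hy j hj => hy j (hj.trans k.lt_succ_self))
      fun y hy => hy k k.lt_succ_self

theorem ContinuousOn.isOpen_setOf_forall_iterate_mem (hs : IsOpen s) (hf : ContinuousOn f s)
    (k : ℕ) : IsOpen {y | ∀ j < k, f^[j] y ∈ s} := by
  induction k with
  | zero => simp
  | succ k ih =>
    have hsucc : {y | ∀ j < k + 1, f^[j] y ∈ s} = {y | ∀ j < k, f^[j] y ∈ s} ∩ f^[k] ⁻¹' s := by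
      ext y
      exact Nat.forall_lt_succ_right
    rw [hsucc]
    exact (hf.continuousOn_iterate k).isOpen_inter_preimage ih hs

end Iterate

theorem Function.IsPeriodicPt.of_leftInvOn {X : Type*} {f g : X → X} {s : Set X} {n : ℕ} {y : X}
    (h : LeftInvOn f g s) (hy : ∀ j < n, g^[j] y ∈ s) (hg : Function.IsPeriodicPt g n y) :
    Function.IsPeriodicPt f n y := by
  have hcancel : ∀ m ≤ n, f^[m] (g^[m] y) = y := by
    intro m hm
    induction m with
    | zero => rfl
    | succ m ih =>
      rw [Function.iterate_succ_apply, Function.iterate_succ_apply', h (hy m hm), ih (by omega)]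
  have := hcancel n le_rfl
  rwa [hg.eq] at this

theorem IsLocalHomeomorph.isOpen_image_of_rightInvOn {X Y : Type*} [TopologicalSpace X]
    [TopologicalSpace Y] {f : X → Y} (hf : IsLocalHomeomorph f) {U : Set Y} (hU : IsOpen U)
    {s : Y → X} (hs : ContinuousOn s U) (hsf : RightInvOn s f U) : IsOpen (s '' U) := by
  rw [isOpen_iff_forall_mem_open]
  rintro _ ⟨y, hy, rfl⟩
  obtain ⟨e, hmem, rfl⟩ := hf (s y)
  set W := U ∩ s ⁻¹' e.source
  have hW : IsOpen W := hs.isOpen_inter_preimage hU e.open_source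
  have hsW : EqOn s e.symm W := fun z hz => by
    simpa only [hsf hz.1] using (e.left_inv hz.2).symm
  have hWt : W ⊆ e.target := fun z hz => by simpa only [hsf hz.1] using e.map_source hz.2
  refine ⟨e.symm '' W, ?_, e.isOpen_image_symm_of_subset_target hW hWt, ?_⟩
  · rw [← hsW.image_eq]
    exact image_mono inter_subset_left
  · exact ⟨y, ⟨hy, hmem⟩, (hsW ⟨hy, hmem⟩).symm⟩

namespace EtaleGroupoid

variable {G : Type*} [TopologicalSpace G]

/-- An open bisection `σ '' Φ.source`, presented by its continuous source section `σ` and the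
partial homeomorphism `Φ = r ∘ σ` it induces on the unit space. -/
structure BisectionChart (𝒢 : EtaleGroupoid G) where
  Φ : OpenPartialHomeomorph G G
  σ : G → G
  continuousOn_σ : ContinuousOn σ Φ.source
  src_σ : ∀ z ∈ Φ.source, 𝒢.src (σ z) = z
  rng_σ : ∀ z ∈ Φ.source, 𝒢.rng (σ z) = Φ z

theorem exists_bisectionChart (𝒢 : EtaleGroupoid G) (γ : G) :
    ∃ c : 𝒢.BisectionChart, 𝒢.src γ ∈ c.Φ.source ∧ c.σ (𝒢.src γ) = γ := by
  obtain ⟨e, hγe, he⟩ := 𝒢.etale_src γ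
  obtain ⟨f, hγf, hf⟩ := 𝒢.etale_rng γ
  have hγ : e.symm (𝒢.src γ) = γ := by rw [he, e.left_inv hγe]
  refine ⟨⟨e.symm.trans f, e.symm, e.continuousOn_symm.mono fun z hz => hz.1,
    fun z hz => by rw [he, e.right_inv hz.1], fun z _ => by rw [hf]; rfl⟩, ?_, hγ⟩
  exact ⟨he ▸ e.map_source hγe, show e.symm (𝒢.src γ) ∈ f.source by rwa [hγ]⟩

namespace BisectionChart

variable {𝒢 : EtaleGroupoid G} (c : 𝒢.BisectionChart)

theorem source_subset_units : c.Φ.source ⊆ 𝒢.units := fun z hz =>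
  c.src_σ z hz ▸ 𝒢.src_mem _

def symm : 𝒢.BisectionChart where
  Φ := c.Φ.symm
  σ := 𝒢.inv ∘ c.σ ∘ c.Φ.symm
  continuousOn_σ := 𝒢.continuous_inv.comp_continuousOn
    (c.continuousOn_σ.comp c.Φ.continuousOn_symm fun _ => c.Φ.map_target)
  src_σ z hz := by
    simp only [Function.comp_apply, 𝒢.src_inv, c.rng_σ _ (c.Φ.map_target hz), c.Φ.right_inv hz]
  rng_σ z hz := by
    simp only [Function.comp_apply, 𝒢.rng_inv, c.src_σ _ (c.Φ.map_target hz)]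

/-- `c.pow k y = σ (Φ^[k-1] y) ⋯ σ (Φ y) σ y`, the arrow of the `k`-th power of the bisection
with source `y`. -/
def pow : ℕ → G → G
  | 0 => id
  | k + 1 => fun y => 𝒢.mul (c.σ (c.Φ^[k] y)) (pow k y)

def powDomain (k : ℕ) : Set G := 𝒢.units ∩ {y | ∀ j < k, c.Φ^[j] y ∈ c.Φ.source}

variable {c}

theorem powDomain_succ_subset {k : ℕ} : c.powDomain (k + 1) ⊆ c.powDomain k :=
  fun _ hy => ⟨hy.1, fun j hj => hy.2 j (hj.trans k.lt_succ_self)⟩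

theorem rng_pow {k : ℕ} {y : G} (hy : y ∈ c.powDomain k) : 𝒢.rng (c.pow k y) = c.Φ^[k] y := by
  induction k with
  | zero => exact 𝒢.rng_unit y hy.1
  | succ k ih =>
    have hk := hy.2 k k.lt_succ_self
    rw [pow, 𝒢.rng_mul _ _ (by rw [c.src_σ _ hk, ih (powDomain_succ_subset hy)]), c.rng_σ _ hk,
      Function.iterate_succ_apply']

theorem src_pow {k : ℕ} {y : G} (hy : y ∈ c.powDomain k) : 𝒢.src (c.pow k y) = y := by
  induction k with
  | zero => exact 𝒢.src_unit y hy.1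
  | succ k ih =>
    have hy' := powDomain_succ_subset hy
    rw [pow, 𝒢.src_mul _ _ (by rw [c.src_σ _ (hy.2 k k.lt_succ_self), rng_pow hy']), ih hy']

variable (c)

theorem isOpen_powDomain (k : ℕ) : IsOpen (c.powDomain k) :=
  𝒢.units_open.inter (c.Φ.continuousOn.isOpen_setOf_forall_iterate_mem c.Φ.open_source k)

theorem continuousOn_pow (k : ℕ) : ContinuousOn (c.pow k) (c.powDomain k) := by
  induction k with
  | zero => exact continuousOn_id
  | succ k ih =>
    have hσ : ContinuousOn (fun y => c.σ (c.Φ^[k] y)) (c.powDomain (k + 1)) :=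
      c.continuousOn_σ.comp
        ((c.Φ.continuousOn.continuousOn_iterate k).mono fun _ hy => (powDomain_succ_subset hy).2)
        fun _ hy => hy.2 k k.lt_succ_self
    change ContinuousOn (fun y => 𝒢.mul (c.σ (c.Φ^[k] y)) (c.pow k y)) _
    refine 𝒢.continuous_mul.comp (hσ.prodMk (ih.mono powDomain_succ_subset)) fun y hy => ?_
    change 𝒢.src (c.σ (c.Φ^[k] y)) = 𝒢.rng (c.pow k y)
    rw [c.src_σ _ (hy.2 k k.lt_succ_self), rng_pow (powDomain_succ_subset hy)]

variable {c} {x : G}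

theorem mem_powDomain (hx : x ∈ c.Φ.source) (hΦx : c.Φ x = x) (k : ℕ) : x ∈ c.powDomain k :=
  ⟨c.source_subset_units hx, fun j _ => by rwa [Function.iterate_fixed hΦx]⟩

theorem pow_eq_npow (hx : x ∈ c.Φ.source) (hΦx : c.Φ x = x) (k : ℕ) :
    c.pow k x = 𝒢.npow (c.σ x) k := by
  induction k with
  | zero => exact (c.rng_σ x hx).trans hΦx |>.symm
  | succ k ih => simp only [pow, ih, Function.iterate_fixed hΦx, npow]

theorem exists_section_zpow (hx : x ∈ c.Φ.source) (hΦx : c.Φ x = x) (n : ℤ) :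
    ∃ U : Set G, ∃ T : G → G, IsOpen U ∧ x ∈ U ∧ ContinuousOn T U ∧
      (∀ y ∈ U, 𝒢.src (T y) = y) ∧ T x = 𝒢.zpow (c.σ x) n ∧
      ∀ y ∈ U, 𝒢.rng (T y) = y → Function.IsPeriodicPt c.Φ n.natAbs y := by
  cases n with
  | ofNat k =>
    exact ⟨c.powDomain k, c.pow k, c.isOpen_powDomain k, mem_powDomain hx hΦx k,
      c.continuousOn_pow k, fun y hy => src_pow hy, pow_eq_npow hx hΦx k,
      fun y hy h => (rng_pow hy).symm.trans h⟩
  | negSucc k =>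
    have hxs : x ∈ c.symm.Φ.source := hΦx ▸ c.Φ.map_source hx
    have hΦsx : c.symm.Φ x = x :=
      calc c.Φ.symm x = c.Φ.symm (c.Φ x) := by rw [hΦx]
        _ = x := c.Φ.left_inv hx
    refine ⟨c.symm.powDomain (k + 1), c.symm.pow (k + 1), c.symm.isOpen_powDomain _,
      mem_powDomain hxs hΦsx _, c.symm.continuousOn_pow _, fun y hy => src_pow hy, ?_,
      fun y hy h => ?_⟩
    · rw [pow_eq_npow hxs hΦsx]
      simp only [symm, Function.comp_apply, show c.Φ.symm x = x from hΦsx]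
      rfl
    · exact Function.IsPeriodicPt.of_leftInvOn c.Φ.rightInvOn hy.2 ((rng_pow hy).symm.trans h)

theorem npow_mem_interior_iso_inter_srcFiber (hx : x ∈ c.Φ.source) (hΦx : c.Φ x = x) {k : ℕ}
    {V : Set G} (hV : IsOpen V) (hxV : x ∈ V) (hVk : V ⊆ c.powDomain k)
    (hper : ∀ y ∈ V, Function.IsPeriodicPt c.Φ k y) :
    𝒢.npow (c.σ x) k ∈ interior 𝒢.iso ∩ 𝒢.srcFiber x := by
  rw [← pow_eq_npow hx hΦx]
  have hopen : IsOpen (c.pow k '' V) := 𝒢.etale_src.isOpen_image_of_rightInvOn hV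
    ((c.continuousOn_pow k).mono hVk) fun y hy => src_pow (hVk hy)
  have hiso : c.pow k '' V ⊆ 𝒢.iso := by
    rintro _ ⟨y, hy, rfl⟩
    exact (rng_pow (hVk hy)).trans ((hper y hy).eq.trans (src_pow (hVk hy)).symm)
  exact ⟨interior_maximal hiso hopen ⟨x, hxV, rfl⟩, src_pow (hVk hxV)⟩

end BisectionChart

variable {𝒢 : EtaleGroupoid G} {x : G}

theorem jointlyEffectiveAt_of_isoGrp_eq_singleton (hx : x ∈ 𝒢.units)
    (htriv : 𝒢.isoGrp x = {x}) : 𝒢.JointlyEffectiveAt x := by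
  intro n γ B hγ _
  have hne : ∀ i, False := fun i =>
    (hγ i).2.2 (htriv.subset ⟨(hγ i).2.1, (hγ i).1.trans (hγ i).2.1⟩)
  exact ⟨x, hx, fun i => (hne i).elim, fun i => (hne i).elim⟩

theorem jointlyEffectiveAt_of_isoGrp_eq_range_zpow {γ₀ : G} (heff : 𝒢.EffectiveAt x)
    (hγ₀ : γ₀ ∈ 𝒢.isoGrp x) (hgen : ∀ η ∈ 𝒢.isoGrp x, ∃ n : ℤ, η = 𝒢.zpow γ₀ n)
    (hinj : Function.Injective (𝒢.zpow γ₀)) : 𝒢.JointlyEffectiveAt x := by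
  intro n γ B hγ hB
  by_contra hcon
  push Not at hcon
  obtain ⟨hsγ₀, hrγ₀⟩ := hγ₀
  obtain ⟨c, hxc, hσx⟩ := 𝒢.exists_bisectionChart γ₀
  rw [hsγ₀] at hxc hσx
  have hΦx : c.Φ x = x := (c.rng_σ x hxc).symm.trans (hσx ▸ hrγ₀)
  choose N hN using fun i => hgen (γ i) ⟨(hγ i).2.1, (hγ i).1.trans (hγ i).2.1⟩
  have hN0 : ∀ i, N i ≠ 0 := fun i h0 => (hγ i).2.2 (by rw [hN i, h0]; exact hrγ₀)
  choose U T hU hxU hTc hTs hTx hTper using fun i => c.exists_section_zpow hxc hΦx (N i)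
  set K := ∏ i, (N i).natAbs
  set V := c.powDomain K ∩ ⋂ i, (U i ∩ T i ⁻¹' B i)
  have hV : IsOpen V := (c.isOpen_powDomain K).inter
    (isOpen_iInter_of_finite fun i => (hTc i).isOpen_inter_preimage (hU i) (hB i).1)
  have hxV : x ∈ V := ⟨BisectionChart.mem_powDomain hxc hΦx K, mem_iInter.2 fun i =>
    ⟨hxU i, by rw [mem_preimage, hTx i, hσx, ← hN i]; exact (hB i).2.2.2⟩⟩
  have hper : ∀ y ∈ V, Function.IsPeriodicPt c.Φ K y := by
    rintro y ⟨hyK, hyT⟩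
    rw [mem_iInter] at hyT
    obtain ⟨i, β, hβ, hβs, hβr⟩ := hcon y hyK.1 fun i => ⟨T i y, (hyT i).2, hTs i y (hyT i).1⟩
    have hβT : β = T i y := (hB i).2.1.1 _ hβ _ (hyT i).2 (hβs.trans (hTs i y (hyT i).1).symm)
    exact (hTper i y (hyT i).1 (hβT ▸ hβr)).trans_dvd
      (Finset.dvd_prod_of_mem _ (Finset.mem_univ i))
  have hmem := BisectionChart.npow_mem_interior_iso_inter_srcFiber hxc hΦx hV hxV
    inter_subset_left hper
  rw [heff, hσx] at hmem
  have hK : ((K : ℕ) : ℤ) = 0 := hinj (hmem.trans hrγ₀.symm)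
  exact Finset.prod_ne_zero_iff.2 (fun i _ => Int.natAbs_ne_zero.2 (hN0 i)) (by exact_mod_cast hK)

end EtaleGroupoid

theorem jointlyEffective_of_infinite_cyclic_isotropy_general
    {G : Type*} [TopologicalSpace G]
    (𝒢 : EtaleGroupoid G)
    (hcyc : ∀ x ∈ 𝒢.units, 𝒢.isoGrp x = {x} ∨
      ∃ γ ∈ 𝒢.isoGrp x, (∀ η ∈ 𝒢.isoGrp x, ∃ n : ℤ, η = 𝒢.zpow γ n) ∧
        Function.Injective (𝒢.zpow γ)) :
    ∀ x ∈ 𝒢.units, 𝒢.EffectiveAt x → 𝒢.JointlyEffectiveAt x := by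
  intro x hx heff
  rcases hcyc x hx with htriv | ⟨γ₀, hγ₀, hgen, hinj⟩
  · exact EtaleGroupoid.jointlyEffectiveAt_of_isoGrp_eq_singleton hx htriv
  · exact EtaleGroupoid.jointlyEffectiveAt_of_isoGrp_eq_range_zpow heff hγ₀ hgen hinj

/-- if every nontrivial isotropy group of a Hausdorff étale groupoid
is infinite cyclic, then the groupoid is jointly effective at every unit at which
it is effective. -/
theorem jointlyEffective_of_infinite_cyclic_isotropy
    {G : Type*} [TopologicalSpace G] [T2Space G]
    (𝒢 : EtaleGroupoid G)
    (hcyc : ∀ x ∈ 𝒢.units, 𝒢.isoGrp x = {x} ∨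
      ∃ γ ∈ 𝒢.isoGrp x, (∀ η ∈ 𝒢.isoGrp x, ∃ n : ℤ, η = 𝒢.zpow γ n) ∧
        Function.Injective (𝒢.zpow γ)) :
    ∀ x ∈ 𝒢.units, 𝒢.EffectiveAt x → 𝒢.JointlyEffectiveAt x :=
  jointlyEffective_of_infinite_cyclic_isotropy_general 𝒢 hcyc
end

section
/- Let T : X → X be a local homeomorphism of a locally compact Hausdorff space. A unit x of the Deaconu–Renault groupoid G_T is not effective if and only if the forward orbit {T^k x : k ∈ ℕ} meets 𝒫 = ⋃_{p≥1} {z : T^p fixes a neighbourhood of z pointwise}. -/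
open Set Function

/-- The arrow space of the Deaconu–Renault groupoid of `T : X → X`. -/
def DRGroupoid {X : Type*} (T : X → X) : Type _ :=
  {g : X × ℤ × X // ∃ m n : ℕ, g.2.1 = (m : ℤ) - n ∧ T^[m] g.1 = T^[n] g.2.2}

/-- The (étale) topology on the Deaconu–Renault groupoid, generated by the basic
open sets `Z(U, m, n, V)`. -/
instance DRGroupoid.instTopologicalSpace {X : Type*} [TopologicalSpace X] (T : X → X) :
    TopologicalSpace (DRGroupoid T) :=
  TopologicalSpace.generateFrom
    {S | ∃ (U V : Set X) (m n : ℕ), IsOpen U ∧ IsOpen V ∧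
      S = {g : DRGroupoid T | g.val.1 ∈ U ∧ g.val.2.2 ∈ V ∧
        g.val.2.1 = (m : ℤ) - n ∧ T^[m] g.val.1 = T^[n] g.val.2.2}}

/-- The isotropy bundle of the Deaconu–Renault groupoid. -/
def DRGroupoid.iso {X : Type*} (T : X → X) : Set (DRGroupoid T) :=
  {g | g.val.1 = g.val.2.2}

/-- The unit of the Deaconu–Renault groupoid corresponding to `x ∈ X`. -/
def DRGroupoid.unit {X : Type*} (T : X → X) (x : X) : DRGroupoid T :=
  ⟨(x, 0, x), 0, 0, by simp, rfl⟩

/-- The Deaconu–Renault groupoid is effective at the unit `x` if the interior of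
the isotropy bundle meets the source fibre over `x` only in the unit. -/
def DRGroupoid.EffectiveAt {X : Type*} [TopologicalSpace X] (T : X → X) (x : X) : Prop :=
  interior (DRGroupoid.iso T) ∩ {g : DRGroupoid T | g.val.2.2 = x}
    = {DRGroupoid.unit T x}

/-!
An isotropy arrow `(x, m - n, x)` lies in the interior of the isotropy bundle exactly when
`T^[m]` and `T^[n]` agree near `x`. If they do, `Z(W, m, n, W)` consists of isotropy as soon as
`T^[n]` is injective on `W`. Conversely, writing the arrow with the least possible `n`, the map
`u ↦ (u, m - n, σ u)`, with `σ` a local inverse of `T^[n]` composed with `T^[m]`, is a local section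
of the range map continuous at `x`; it therefore lands in the isotropy near `x`, i.e. `σ u = u`.
Finally `T^[m] = T^[n]` near `x` with `m < n` says that `T^[n - m]` fixes the open set
`T^[m] '' W ∋ T^[m] x` pointwise.
-/

open Filter Topology

theorem IsLocalHomeomorph.iterate {X : Type*} [TopologicalSpace X] {T : X → X}
    (hT : IsLocalHomeomorph T) (n : ℕ) : IsLocalHomeomorph T^[n] := by
  induction n with
  | zero => simpa using (Homeomorph.refl X).isLocalHomeomorph
  | succ n ih => rw [iterate_succ']; exact hT.comp ih

theorem IsLocalHomeomorph.exists_iterate_eventuallyEq_iff {X : Type*} [TopologicalSpace X]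
    {T : X → X} (hT : IsLocalHomeomorph T) (x : X) :
    (∃ m n : ℕ, m ≠ n ∧ T^[m] =ᶠ[𝓝 x] T^[n]) ↔
      ∃ k p : ℕ, 0 < p ∧ ∃ U : Set X, IsOpen U ∧ T^[k] x ∈ U ∧ ∀ u ∈ U, T^[p] u = u := by
  constructor
  · rintro ⟨m, n, hmn, h⟩
    wlog hlt : m < n generalizing m n
    · exact this n m hmn.symm h.symm (by omega)
    obtain ⟨W, hW, hWo, hxW⟩ := eventually_nhds_iff.1 h
    refine ⟨m, n - m, by omega, T^[m] '' W, (hT.iterate m).isOpenMap W hWo,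
      mem_image_of_mem _ hxW, ?_⟩
    rintro _ ⟨w, hw, rfl⟩
    rw [← iterate_add_apply, Nat.sub_add_cancel hlt.le]
    exact (hW w hw).symm
  · rintro ⟨k, p, hp, U, hU, hxU, hfix⟩
    refine ⟨k + p, k, by omega, ?_⟩
    filter_upwards [(hT.iterate k).continuous.continuousAt.preimage_mem_nhds (hU.mem_nhds hxU)]
      with u hu
    rw [add_comm, iterate_add_apply]
    exact hfix _ hu

namespace DRGroupoid

variable {X : Type*} {T : X → X}

def ofEq {x y : X} {m n : ℕ} (h : T^[m] x = T^[n] y) : DRGroupoid T :=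
  ⟨(x, m - n, y), m, n, rfl, h⟩

variable (T) in
def basicOpen (U V : Set X) (m n : ℕ) : Set (DRGroupoid T) :=
  {g | g.val.1 ∈ U ∧ g.val.2.2 ∈ V ∧ g.val.2.1 = (m : ℤ) - n ∧ T^[m] g.val.1 = T^[n] g.val.2.2}

theorem basicOpen_subset_iso {W : Set X} {m n : ℕ} (hinj : InjOn T^[n] W)
    (heq : EqOn T^[m] T^[n] W) : basicOpen T W W m n ⊆ iso T :=
  fun _ ⟨h₁, h₂, _, hT⟩ => hinj h₁ h₂ ((heq h₁).symm.trans hT)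

variable [TopologicalSpace X]

theorem isOpen_basicOpen {U V : Set X} (hU : IsOpen U) (hV : IsOpen V) (m n : ℕ) :
    IsOpen (basicOpen T U V m n) :=
  TopologicalSpace.isOpen_generateFrom_of_mem ⟨U, V, m, n, hU, hV, rfl⟩

theorem tendsto_nhds_iff {α : Type*} {l : Filter α} {f : α → DRGroupoid T} {g : DRGroupoid T} :
    Tendsto f l (𝓝 g) ↔ ∀ (U V : Set X) (m n : ℕ), IsOpen U → IsOpen V →
      g ∈ basicOpen T U V m n → f ⁻¹' basicOpen T U V m n ∈ l := by
  rw [TopologicalSpace.tendsto_nhds_generateFrom_iff]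
  constructor
  · intro h U V m n hU hV
    exact h _ ⟨U, V, m, n, hU, hV, rfl⟩
  · rintro h _ ⟨U, V, m, n, hU, hV, rfl⟩
    exact h U V m n hU hV

theorem unit_mem_interior_iso (x : X) : unit T x ∈ interior (iso T) :=
  mem_interior.2 ⟨basicOpen T univ univ 0 0, basicOpen_subset_iso (injOn_id _) (fun _ _ => rfl),
    isOpen_basicOpen isOpen_univ isOpen_univ 0 0, trivial, trivial, rfl, rfl⟩

theorem effectiveAt_iff {x : X} :
    EffectiveAt T x ↔ ∀ g ∈ interior (iso T), g.val.2.2 = x → g.val.2.1 = 0 := by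
  constructor
  · intro h g hg hgx
    have : g = unit T x := by rw [← mem_singleton_iff, ← h]; exact ⟨hg, hgx⟩
    rw [this]
    rfl
  · intro h
    ext g
    constructor
    · rintro ⟨hg, hgx⟩
      have hrs : g ∈ iso T := interior_subset hg
      exact Subtype.ext (Prod.ext (hrs.trans hgx) (Prod.ext (h g hg hgx) hgx))
    · rintro rfl
      exact ⟨unit_mem_interior_iso x, rfl⟩

theorem ofEq_mem_interior_iso (hT : IsLocalHomeomorph T) {x : X} {m n : ℕ}
    (h : T^[m] =ᶠ[𝓝 x] T^[n]) : ofEq h.eq_of_nhds ∈ interior (iso T) := by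
  obtain ⟨W₁, hW₁o, hxW₁, hinj⟩ := (hT.iterate n).isLocallyInjective x
  obtain ⟨W₂, hW₂, hW₂o, hxW₂⟩ := eventually_nhds_iff.1 h
  exact mem_interior.2 ⟨basicOpen T (W₁ ∩ W₂) (W₁ ∩ W₂) m n,
    basicOpen_subset_iso (hinj.mono inter_subset_left) (fun u hu => hW₂ u hu.2),
    isOpen_basicOpen (hW₁o.inter hW₂o) (hW₁o.inter hW₂o) m n,
    ⟨hxW₁, hxW₂⟩, ⟨hxW₁, hxW₂⟩, rfl, h.eq_of_nhds⟩

theorem exists_tendsto_section (hT : IsLocalHomeomorph T) (g : DRGroupoid T) :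
    ∃ m n : ℕ, g.val.2.1 = m - n ∧ ∃ ψ : X → DRGroupoid T, Tendsto ψ (𝓝 g.val.1) (𝓝 g) ∧
      ∀ᶠ u in 𝓝 g.val.1, (ψ u).val.1 = u ∧ T^[m] u = T^[n] (ψ u).val.2.2 := by
  classical
  set x := g.val.1
  set y := g.val.2.2
  have hrep : ∃ n m : ℕ, (m : ℤ) - n = g.val.2.1 ∧ T^[m] x = T^[n] y := by
    obtain ⟨m, n, hl, hxy⟩ := g.prop
    exact ⟨n, m, hl.symm, hxy⟩
  -- With `n` minimal, every basic open `Z(U, m', n', V) ∋ g` has `n ≤ n'`, so `ψ` enters it.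
  obtain ⟨m, hml, hxy⟩ := Nat.find_spec hrep
  set n := Nat.find hrep
  obtain ⟨e, hye, he⟩ := hT.iterate n y
  have hmx : T^[m] x ∈ e.target := by rw [hxy, he]; exact e.map_source hye
  have hW : T^[m] ⁻¹' e.target ∈ 𝓝 x :=
    ((hT.iterate m).continuous.isOpen_preimage _ e.open_target).mem_nhds hmx
  have hσ : ∀ u ∈ T^[m] ⁻¹' e.target, T^[m] u = T^[n] (e.symm (T^[m] u)) := fun u hu => by
    rw [he, e.right_inv hu]
  let ψ : X → DRGroupoid T := fun u =>
    if hu : u ∈ T^[m] ⁻¹' e.target then ofEq (hσ u hu) else g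
  have hψ : ∀ u (hu : u ∈ T^[m] ⁻¹' e.target), ψ u = ofEq (hσ u hu) := fun u hu => dif_pos hu
  refine ⟨m, n, hml.symm, ψ, ?_, ?_⟩
  · rw [tendsto_nhds_iff]
    rintro U V m' n' hU hV ⟨hxU, hyV, hl, hxy'⟩
    have hn : n ≤ n' := Nat.find_min' hrep ⟨m', hl.symm, hxy'⟩
    have hσV : (e.symm ∘ T^[m]) ⁻¹' V ∈ 𝓝 x := by
      refine ContinuousAt.preimage_mem_nhds
        ((e.continuousAt_symm hmx).comp (hT.iterate m).continuous.continuousAt) ?_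
      rw [comp_apply, hxy, he, e.left_inv hye]
      exact hV.mem_nhds hyV
    filter_upwards [hW, hU.mem_nhds hxU, hσV] with u huW huU huV
    rw [mem_preimage, hψ u huW]
    refine ⟨huU, huV, by simp only [ofEq]; omega, ?_⟩
    obtain ⟨d, rfl⟩ := Nat.exists_eq_add_of_le hn
    show T^[m'] u = T^[n + d] (e.symm (T^[m] u))
    rw [show m' = d + m by omega, add_comm n d, iterate_add_apply, iterate_add_apply]
    exact congrArg T^[d] (hσ u huW)
  · filter_upwards [hW] with u hu
    rw [hψ u hu]
    exact ⟨rfl, hσ u hu⟩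

theorem eventuallyEq_iterate_of_mem_interior_iso (hT : IsLocalHomeomorph T) {g : DRGroupoid T}
    (hg : g ∈ interior (iso T)) : ∃ m n : ℕ, g.val.2.1 = m - n ∧ T^[m] =ᶠ[𝓝 g.val.2.2] T^[n] := by
  obtain ⟨m, n, hl, ψ, hψ, hψr⟩ := exists_tendsto_section hT g
  have hrs : g ∈ iso T := interior_subset hg
  refine ⟨m, n, hl, ?_⟩
  rw [← show g.val.1 = g.val.2.2 from hrs]
  filter_upwards [hψ (isOpen_interior.mem_nhds hg), hψr] with u hu ⟨hr, heq⟩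
  have hu_iso : ψ u ∈ iso T := interior_subset hu
  rw [heq, ← show (ψ u).val.1 = (ψ u).val.2.2 from hu_iso, hr]

theorem not_effectiveAt_iff_exists_iterate_eventuallyEq (hT : IsLocalHomeomorph T) {x : X} :
    ¬ EffectiveAt T x ↔ ∃ m n : ℕ, m ≠ n ∧ T^[m] =ᶠ[𝓝 x] T^[n] := by
  rw [effectiveAt_iff]
  push Not
  constructor
  · rintro ⟨g, hg, rfl, hl⟩
    obtain ⟨m, n, hmn, h⟩ := eventuallyEq_iterate_of_mem_interior_iso hT hg
    exact ⟨m, n, fun hmn' => hl (by rw [hmn, hmn', sub_self]), h⟩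
  · rintro ⟨m, n, hmn, h⟩
    exact ⟨_, ofEq_mem_interior_iso hT h, rfl, by simp only [ofEq]; omega⟩

end DRGroupoid

theorem DRGroupoid_not_effectiveAt_iff_orbit_meets_P_general
    {X : Type*} [TopologicalSpace X]
    (T : X → X) (hT : IsLocalHomeomorph T) (x : X) :
    ¬ DRGroupoid.EffectiveAt T x ↔
      ∃ k : ℕ, ∃ p : ℕ, 0 < p ∧
        ∃ U : Set X, IsOpen U ∧ T^[k] x ∈ U ∧ ∀ u ∈ U, T^[p] u = u :=
  (DRGroupoid.not_effectiveAt_iff_exists_iterate_eventuallyEq hT).trans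
    (hT.exists_iterate_eventuallyEq_iff x)

/-- a unit `x` of the Deaconu–Renault groupoid of a local
homeomorphism `T` fails to be effective iff its forward orbit meets
`𝒫 = ⋃_{p ≥ 1} {z : T^p fixes a neighbourhood of z pointwise}`. -/
theorem DRGroupoid_not_effectiveAt_iff_orbit_meets_P
    {X : Type*} [TopologicalSpace X] [T2Space X] [LocallyCompactSpace X]
    (T : X → X) (hT : IsLocalHomeomorph T) (x : X) :
    ¬ DRGroupoid.EffectiveAt T x ↔
      ∃ k : ℕ, ∃ p : ℕ, 0 < p ∧
        ∃ U : Set X, IsOpen U ∧ T^[k] x ∈ U ∧ ∀ u ∈ U, T^[p] u = u :=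
  DRGroupoid_not_effectiveAt_iff_orbit_meets_P_general T hT x
end

section
/- Let θ : Γ ↷ X be a partial action of a discrete group on a locally compact Hausdorff space. Then θ is strongly topologically free at x ∈ X if and only if the transformation groupoid G_θ is jointly effective at x. -/
open Set

/-- A partial action of a discrete group `Γ` on a topological space `X`. -/
structure PartialAction (Γ : Type*) [Group Γ] (X : Type*) [TopologicalSpace X] where
  dom : Γ → Set X
  act : Γ → X → X
  dom_open : ∀ g, IsOpen (dom g)
  dom_one : dom 1 = Set.univ
  act_one : ∀ x, act 1 x = x
  act_mem : ∀ g, ∀ x ∈ dom g, act g x ∈ dom g⁻¹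
  act_inv : ∀ g, ∀ x ∈ dom g, act g⁻¹ (act g x) = x
  act_mul : ∀ g h, ∀ x ∈ dom h, act h x ∈ dom g →
    x ∈ dom (g * h) ∧ act (g * h) x = act g (act h x)
  continuousOn : ∀ g, ContinuousOn (act g) (dom g)

namespace PartialAction

variable {Γ : Type*} [Group Γ] {X : Type*} [TopologicalSpace X]

/-- The arrow space of the transformation groupoid of a partial action:
triples `(x, g, y)` with `y ∈ dom g` and `θ_g y = x`. -/
def Groupoid (θ : PartialAction Γ X) : Type _ :=
  {q : X × Γ × X // q.2.2 ∈ θ.dom q.2.1 ∧ θ.act q.2.1 q.2.2 = q.1}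

/-- The étale topology on the transformation groupoid, generated by the sets
`{(θ_g y, g, y) : y ∈ U ∩ dom g}` for `g ∈ Γ` and `U ⊆ X` open. -/
instance (θ : PartialAction Γ X) : TopologicalSpace θ.Groupoid :=
  TopologicalSpace.generateFrom
    {S | ∃ (g : Γ) (U : Set X), IsOpen U ∧
      S = {q : θ.Groupoid | q.val.2.1 = g ∧ q.val.2.2 ∈ U}}

/-- Source map. -/
def src (θ : PartialAction Γ X) (q : θ.Groupoid) : X := q.val.2.2

/-- Range map. -/
def rng (θ : PartialAction Γ X) (q : θ.Groupoid) : X := q.val.1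

/-- Units of the transformation groupoid. -/
def unitSet (θ : PartialAction Γ X) : Set θ.Groupoid := {q | q.val.2.1 = 1}

/-- The unit over `x ∈ X`. -/
def unit (θ : PartialAction Γ X) (x : X) : θ.Groupoid :=
  ⟨(x, 1, x), by simp [θ.dom_one], θ.act_one x⟩

/-- Isotropy bundle of the transformation groupoid. -/
def iso (θ : PartialAction Γ X) : Set θ.Groupoid := {q | q.val.1 = q.val.2.2}

/-- Effectiveness of the transformation groupoid at a unit `x`. -/
def EffectiveAt (θ : PartialAction Γ X) (x : X) : Prop :=
  interior θ.iso ∩ {q : θ.Groupoid | θ.src q = x} = {θ.unit x}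

/-- Bisection of the transformation groupoid. -/
def IsBisection (θ : PartialAction Γ X) (B : Set θ.Groupoid) : Prop :=
  (∀ q ∈ B, ∀ q' ∈ B, θ.src q = θ.src q' → q = q') ∧
  (∀ q ∈ B, ∀ q' ∈ B, θ.rng q = θ.rng q' → q = q')

/-- Joint effectiveness of the transformation groupoid at a unit `x`. -/
def JointlyEffectiveAt (θ : PartialAction Γ X) (x : X) : Prop :=
  ∀ (k : ℕ) (γ : Fin k → θ.Groupoid) (B : Fin k → Set θ.Groupoid),
    (∀ i, γ i ∈ θ.iso ∧ θ.src (γ i) = x ∧ γ i ≠ θ.unit x) →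
    (∀ i, IsOpen (B i) ∧ θ.IsBisection (B i) ∧ B i ∩ θ.unitSet = ∅ ∧ γ i ∈ B i) →
    ∃ y : X, (∀ i, ∃ q ∈ B i, θ.src q = y) ∧
      (∀ i, ∀ q ∈ B i, θ.src q = y → θ.rng q ≠ y)

/-- Topological freeness of a partial action at a point. -/
def TopologicallyFreeAt (θ : PartialAction Γ X) (x : X) : Prop :=
  ∀ g : Γ, g ≠ 1 → x ∈ θ.dom g → θ.act g x = x →
    ∀ U : Set X, IsOpen U → x ∈ U →
      ∃ y ∈ U, y ∉ θ.dom g ∨ θ.act g y ≠ y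

/-- Strong topological freeness of a partial action at a point. -/
def StronglyTopologicallyFreeAt (θ : PartialAction Γ X) (x : X) : Prop :=
  ∀ (k : ℕ) (g : Fin k → Γ),
    (∀ i, g i ≠ 1 ∧ x ∈ θ.dom (g i) ∧ θ.act (g i) x = x) →
    ∀ U : Set X, IsOpen U → x ∈ U →
      ∃ y ∈ U, ∀ i, y ∉ θ.dom (g i) ∨ θ.act (g i) y ≠ y

end PartialAction

/-- a partial action is strongly topologically free at `x` iff its
transformation groupoid is jointly effective at `x`. -/
theorem stronglyTopologicallyFree_iff_jointlyEffective
    {Γ : Type*} [Group Γ] {X : Type*} [TopologicalSpace X] [T2Space X]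
    [LocallyCompactSpace X]
    (θ : PartialAction Γ X) (x : X) :
    θ.StronglyTopologicallyFreeAt x ↔ θ.JointlyEffectiveAt x := by
  constructor
  · -- strongly topologically free → jointly effective
    intro hST k γ B hγ hB
    have hbasis : TopologicalSpace.IsTopologicalBasis
        {S : Set θ.Groupoid | ∃ (g : Γ) (U : Set X), IsOpen U ∧
          S = {q : θ.Groupoid | q.val.2.1 = g ∧ q.val.2.2 ∈ U}} := by
      refine ⟨?_, ?_, rfl⟩
      · rintro S₁ ⟨g, U, hU, rfl⟩ S₂ ⟨h, V, hV, rfl⟩ q ⟨⟨hq1, hq2⟩, hq3, hq4⟩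
        refine ⟨{q : θ.Groupoid | q.val.2.1 = g ∧ q.val.2.2 ∈ U ∩ V},
          ⟨g, U ∩ V, hU.inter hV, rfl⟩, ⟨hq1, hq2, hq4⟩, ?_⟩
        rintro p ⟨hp1, hp2, hp3⟩
        exact ⟨⟨hp1, hp2⟩, hp1.trans (hq1.symm.trans hq3), hp3⟩
      · ext q
        simp only [mem_sUnion, mem_univ, iff_true]
        exact ⟨_, ⟨q.val.2.1, univ, isOpen_univ, rfl⟩, rfl, mem_univ _⟩
    set gf : Fin k → Γ := fun i => (γ i).val.2.1 with hgf
    -- facts about the isotropy elements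
    have hsrcx : ∀ i, (γ i).val.2.2 = x := fun i => (hγ i).2.1
    have hrngx : ∀ i, (γ i).val.1 = x := fun i => ((hγ i).1).trans (hsrcx i)
    have hxdom : ∀ i, x ∈ θ.dom (gf i) := fun i => hsrcx i ▸ (γ i).prop.1
    have hactx : ∀ i, θ.act (gf i) x = x := by
      intro i
      have := (γ i).prop.2
      rw [hsrcx i, hrngx i] at this
      exact this
    have hgne : ∀ i, gf i ≠ 1 := by
      intro i h1
      apply (hγ i).2.2
      apply Subtype.ext
      have : (γ i).val = ((γ i).val.1, (γ i).val.2.1, (γ i).val.2.2) := rfl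
      rw [this, hrngx i, hsrcx i]
      exact congrArg (fun a : Γ => ((x, a, x) : X × Γ × X)) h1
    -- extract basic neighbourhoods inside the bisections
    have hbase : ∀ i, ∃ U : Set X, IsOpen U ∧ x ∈ U ∧
        ∀ q : θ.Groupoid, q.val.2.1 = gf i → q.val.2.2 ∈ U → q ∈ B i := by
      intro i
      obtain ⟨S, ⟨g, U, hU, rfl⟩, hmem, hsub⟩ :=
        hbasis.exists_subset_of_mem_open (hB i).2.2.2 (hB i).1
      refine ⟨U, hU, hsrcx i ▸ hmem.2, ?_⟩
      intro q hq1 hq2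
      exact hsub ⟨hq1.trans hmem.1, hq2⟩
    choose U hUopen hxU hUsub using hbase
    -- apply strong topological freeness
    obtain ⟨y, hyV, hy⟩ := hST k gf (fun i => ⟨hgne i, hxdom i, hactx i⟩)
      (⋂ i, U i ∩ θ.dom (gf i))
      (isOpen_iInter_of_finite fun i => (hUopen i).inter (θ.dom_open (gf i)))
      (mem_iInter.2 fun i => ⟨hxU i, hxdom i⟩)
    have hyU : ∀ i, y ∈ U i := fun i => (mem_iInter.1 hyV i).1
    have hydom : ∀ i, y ∈ θ.dom (gf i) := fun i => (mem_iInter.1 hyV i).2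
    have hyact : ∀ i, θ.act (gf i) y ≠ y := by
      intro i
      rcases hy i with h | h
      · exact absurd (hydom i) h
      · exact h
    set q0 : ∀ i : Fin k, θ.Groupoid :=
      fun i => ⟨(θ.act (gf i) y, gf i, y), hydom i, rfl⟩ with hq0
    have hq0B : ∀ i, q0 i ∈ B i := fun i => hUsub i (q0 i) rfl (hyU i)
    refine ⟨y, fun i => ⟨q0 i, hq0B i, rfl⟩, ?_⟩
    intro i q hq hsq
    have : q = q0 i := (hB i).2.1.1 q hq (q0 i) (hq0B i) hsq
    rw [this]
    exact hyact i
  · -- jointly effective → strongly topologically free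
    intro hJE k g hg U hU hxU
    rcases Nat.eq_zero_or_pos k with hk | hk
    · subst hk
      exact ⟨x, hxU, fun i => i.elim0⟩
    set γ : Fin k → θ.Groupoid :=
      fun i => ⟨(x, g i, x), (hg i).2.1, (hg i).2.2⟩ with hγdef
    set B : Fin k → Set θ.Groupoid :=
      fun i => {q : θ.Groupoid | q.val.2.1 = g i ∧ q.val.2.2 ∈ U} with hBdef
    have hBopen : ∀ i, IsOpen (B i) :=
      fun i => TopologicalSpace.isOpen_generateFrom_of_mem ⟨g i, U, hU, rfl⟩
    have hBbis : ∀ i, θ.IsBisection (B i) := by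
      intro i
      constructor
      · rintro ⟨⟨r, gg, s⟩, hq⟩ ⟨h1, _⟩ ⟨⟨r', gg', s'⟩, hq'⟩ ⟨h1', _⟩ hs
        simp only [PartialAction.src] at hs
        apply Subtype.ext
        have e : θ.act gg s = r := hq.2
        have e' : θ.act gg' s' = r' := hq'.2
        have hg1 : gg = g i := h1
        have hg1' : gg' = g i := h1'
        have hr : r = r' := by rw [← e, ← e', hg1, hg1', hs]
        simp_all
      · rintro ⟨⟨r, gg, s⟩, hq⟩ ⟨h1, _⟩ ⟨⟨r', gg', s'⟩, hq'⟩ ⟨h1', _⟩ hr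
        simp only [PartialAction.rng] at hr
        apply Subtype.ext
        have hg1 : gg = g i := h1
        have hg1' : gg' = g i := h1'
        have hs : s = s' := by
          have e1 : θ.act gg⁻¹ (θ.act gg s) = s := θ.act_inv gg s hq.1
          have e2 : θ.act gg'⁻¹ (θ.act gg' s') = s' := θ.act_inv gg' s' hq'.1
          rw [show θ.act gg s = r from hq.2] at e1
          rw [show θ.act gg' s' = r' from hq'.2] at e2
          rw [← e1, ← e2, hg1, hg1', hr]
        simp_all
    have hBunit : ∀ i, B i ∩ θ.unitSet = ∅ := by
      intro i
      ext q
      simp only [mem_inter_iff, mem_empty_iff_false, iff_false]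
      rintro ⟨⟨h1, _⟩, h2⟩
      exact (hg i).1 (h1.symm.trans h2)
    have hγB : ∀ i, γ i ∈ B i := fun i => ⟨rfl, hxU⟩
    have hγiso : ∀ i, γ i ∈ θ.iso ∧ θ.src (γ i) = x ∧ γ i ≠ θ.unit x := by
      intro i
      refine ⟨rfl, rfl, ?_⟩
      intro h
      exact (hg i).1 (congrArg (fun q : θ.Groupoid => q.val.2.1) h)
    obtain ⟨y, hy1, hy2⟩ := hJE k γ B hγiso
      (fun i => ⟨hBopen i, hBbis i, hBunit i, hγB i⟩)
    have hyU : y ∈ U := by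
      obtain ⟨q, hqB, hqs⟩ := hy1 ⟨0, hk⟩
      exact hqs ▸ hqB.2
    refine ⟨y, hyU, fun i => ?_⟩
    by_cases hydom : y ∈ θ.dom (g i)
    · right
      have : (⟨(θ.act (g i) y, g i, y), hydom, rfl⟩ : θ.Groupoid) ∈ B i := ⟨rfl, hyU⟩
      exact hy2 i _ this rfl
    · left
      exact hydom
end

section
/- Consider X the cross ([−1,1]×{0}) ∪ ({0}×[−1,1]) with the (ℤ/2ℤ)²-action generated by φ(x,y)=(−x,y) and ψ(x,y)=(x,−y). The origin (0,0) is an effective unit of the transformation groupoid X ⋊ (ℤ/2ℤ)², but the groupoid is not jointly effective at the origin. -/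
open Set

/-- The sign `(-1)^n` attached to an element of `ℤ/2ℤ`. -/
noncomputable def crossSign (n : ZMod 2) : ℝ := if n = 0 then 1 else -1

/-- The action of `(ℤ/2ℤ)²` on the plane generated by `φ(x,y) = (-x,y)` and
`ψ(x,y) = (x,-y)`. -/
noncomputable def crossAct (g : ZMod 2 × ZMod 2) (p : ℝ × ℝ) : ℝ × ℝ :=
  (crossSign g.1 * p.1, crossSign g.2 * p.2)

/-- Exel's cross `X = ([-1,1] × {0}) ∪ ({0} × [-1,1]) ⊆ ℝ²`. -/
def crossSet : Set (ℝ × ℝ) :=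
  {p | (p.2 = 0 ∧ p.1 ∈ Icc (-1 : ℝ) 1) ∨ (p.1 = 0 ∧ p.2 ∈ Icc (-1 : ℝ) 1)}

/-- the origin is an effective unit of the transformation groupoid
of Exel's cross, but the groupoid is not jointly effective at the origin. -/
theorem cross_effective_not_jointly_effective_at_origin :
    (∀ g : ZMod 2 × ZMod 2, g ≠ 0 → crossAct g ((0, 0) : ℝ × ℝ) = (0, 0) →
      ∀ U : Set (ℝ × ℝ), IsOpen U → ((0, 0) : ℝ × ℝ) ∈ U →
        ∃ y ∈ U ∩ crossSet, crossAct g y ≠ y) ∧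
    ¬ (∀ (n : ℕ) (g : Fin n → ZMod 2 × ZMod 2),
        (∀ i, g i ≠ 0 ∧ crossAct (g i) ((0, 0) : ℝ × ℝ) = (0, 0)) →
        ∀ U : Set (ℝ × ℝ), IsOpen U → ((0, 0) : ℝ × ℝ) ∈ U →
          ∃ y ∈ U ∩ crossSet, ∀ i, crossAct (g i) y ≠ y) := by
  constructor
  · intro g hg _ U hU hmem
    obtain ⟨ε, hε, hball⟩ := Metric.isOpen_iff.mp hU _ hmem
    set δ : ℝ := min (ε / 2) (1 / 2) with hδdef
    have hδpos : 0 < δ := lt_min (by linarith) (by norm_num)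
    have hδε : δ < ε := lt_of_le_of_lt (min_le_left _ _) (by linarith)
    have hδ1 : δ ≤ 1 := le_trans (min_le_right _ _) (by norm_num)
    have hδicc : δ ∈ Icc (-1 : ℝ) 1 := ⟨by linarith, hδ1⟩
    by_cases h1 : g.1 = 0
    · have h2 : g.2 ≠ 0 := by
        intro h2
        exact hg (Prod.ext h1 h2)
      refine ⟨(0, δ), ⟨hball ?_, Or.inr ⟨rfl, hδicc⟩⟩, ?_⟩
      · simp only [Metric.mem_ball, Prod.dist_eq, Real.dist_eq]
        simp [abs_of_pos hδpos, hδε, hε]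
      · intro hfix
        have := congrArg Prod.snd hfix
        simp only [crossAct, crossSign, if_neg h2] at this
        nlinarith
    · refine ⟨(δ, 0), ⟨hball ?_, Or.inl ⟨rfl, hδicc⟩⟩, ?_⟩
      · simp only [Metric.mem_ball, Prod.dist_eq, Real.dist_eq]
        simp [abs_of_pos hδpos, hδε, hε]
      · intro hfix
        have := congrArg Prod.fst hfix
        simp only [crossAct, crossSign, if_neg h1] at this
        nlinarith
  · intro H
    have h0 : crossAct ((1 : ZMod 2), (0 : ZMod 2)) ((0, 0) : ℝ × ℝ) = (0, 0) := by
      simp [crossAct]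
    have h0' : crossAct ((0 : ZMod 2), (1 : ZMod 2)) ((0, 0) : ℝ × ℝ) = (0, 0) := by
      simp [crossAct]
    obtain ⟨y, ⟨-, hy⟩, hmove⟩ := H 2 ![((1 : ZMod 2), (0 : ZMod 2)), ((0 : ZMod 2), (1 : ZMod 2))]
      (by
        intro i
        fin_cases i
        · exact ⟨by decide, h0⟩
        · exact ⟨by decide, h0'⟩)
      univ isOpen_univ (mem_univ _)
    rcases hy with ⟨hy2, -⟩ | ⟨hy1, -⟩
    · refine hmove 1 ?_
      simp only [Matrix.cons_val_one, Matrix.head_cons]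
      exact Prod.ext (by simp [crossAct, crossSign]) (by simp [crossAct, crossSign, hy2])
    · refine hmove 0 ?_
      simp only [Matrix.cons_val_zero]
      exact Prod.ext (by simp [crossAct, crossSign, hy1]) (by simp [crossAct, crossSign])
end

section
/- Let G be a locally compact Hausdorff étale groupoid, let x be a unit, and let U be an open subset of the unit space contained in the set of effective units. Then G is jointly effective at every point of U. -/
open Set

section Aux

variable {G : Type*} [TopologicalSpace G] [T2Space G]

lemma EtaleGroupoid.step_lemma (𝒢 : EtaleGroupoid G) (U : Set G)
    (hU : U ⊆ {x | x ∈ 𝒢.units ∧ 𝒢.EffectiveAt x})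
    (B : Set G) (hBopen : IsOpen B) (hBbis : 𝒢.IsBisection B)
    (hBu : B ∩ 𝒢.units = ∅)
    (V : Set G) (hVopen : IsOpen V) (hVU : V ⊆ U)
    (hVs : V ⊆ 𝒢.src '' B) :
    ∃ V', IsOpen V' ∧ (V.Nonempty → V'.Nonempty) ∧ V' ⊆ V ∧
      ∀ y ∈ V', ∀ β ∈ B, 𝒢.src β = y → 𝒢.rng β ≠ y := by
  have hsc : Continuous 𝒢.src := 𝒢.etale_src.continuous
  have hrc : Continuous 𝒢.rng := 𝒢.etale_rng.continuous
  have hsopen : IsOpenMap 𝒢.src := 𝒢.etale_src.isOpenMap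
  set D := (B ∩ 𝒢.src ⁻¹' V) ∩ {β | 𝒢.rng β ≠ 𝒢.src β} with hD
  have hDopen : IsOpen D :=
    (hBopen.inter (hVopen.preimage hsc)).inter (isOpen_ne_fun hrc hsc)
  refine ⟨𝒢.src '' D, hsopen D hDopen, ?_, ?_, ?_⟩
  · rintro ⟨y, hy⟩
    by_contra hemp
    rw [not_nonempty_iff_eq_empty, image_eq_empty] at hemp
    -- then B ∩ src⁻¹ V ⊆ iso
    have hCiso : B ∩ 𝒢.src ⁻¹' V ⊆ 𝒢.iso := by
      intro β hβ
      by_contra hne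
      have hmem : β ∈ D := ⟨hβ, hne⟩
      rw [hemp] at hmem
      exact hmem
    obtain ⟨β, hβB, hβs⟩ := hVs hy
    have hβC : β ∈ B ∩ 𝒢.src ⁻¹' V := ⟨hβB, by rw [mem_preimage, hβs]; exact hy⟩
    have hβint : β ∈ interior 𝒢.iso :=
      interior_maximal hCiso (hBopen.inter (hVopen.preimage hsc)) hβC
    have heff : 𝒢.EffectiveAt y := (hU (hVU hy)).2
    have hβy : β = y := by
      have : β ∈ interior 𝒢.iso ∩ 𝒢.srcFiber y := ⟨hβint, hβs⟩
      rw [heff] at this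
      exact this
    have : y ∈ B ∩ 𝒢.units := ⟨hβy ▸ hβB, (hU (hVU hy)).1⟩
    rw [hBu] at this
    exact this
  · rintro z ⟨β, ⟨⟨_, hβV⟩, _⟩, rfl⟩
    exact hβV
  · rintro z ⟨δ, ⟨⟨hδB, _⟩, hδne⟩, rfl⟩ β hβB hβs
    have : β = δ := hBbis.1 β hβB δ hδB hβs
    rw [this]
    exact hδne

end Aux

/-- `G` is jointly effective at every point of an open set of units
contained in the set of effective units. -/
theorem jointlyEffective_on_open_subset_of_effective_units
    {G : Type*} [TopologicalSpace G] [T2Space G] [LocallyCompactSpace G]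
    (𝒢 : EtaleGroupoid G) (U : Set G) (hUopen : IsOpen U)
    (hU : U ⊆ {x | x ∈ 𝒢.units ∧ 𝒢.EffectiveAt x}) :
    ∀ x ∈ U, 𝒢.JointlyEffectiveAt x := by
  intro x hx n γ B hγ hB
  have hsopen : IsOpenMap 𝒢.src := 𝒢.etale_src.isOpenMap
  set S := U ∩ ⋂ i, 𝒢.src '' (B i) with hS
  have hSopen : IsOpen S :=
    hUopen.inter (isOpen_iInter_of_finite fun i => hsopen _ (hB i).1)
  have hxS : x ∈ S := by
    refine ⟨hx, mem_iInter.mpr fun i => ⟨γ i, (hB i).2.2.2, (hγ i).2.1⟩⟩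
  have key : ∀ k : ℕ, ∃ V, IsOpen V ∧ V.Nonempty ∧ V ⊆ S ∧
      ∀ y ∈ V, ∀ i : Fin n, (i : ℕ) < k → ∀ β ∈ B i, 𝒢.src β = y → 𝒢.rng β ≠ y := by
    intro k
    induction k with
    | zero => exact ⟨S, hSopen, ⟨x, hxS⟩, subset_rfl, fun y _ i hi => absurd hi (Nat.not_lt_zero _)⟩
    | succ k ih =>
      obtain ⟨V, hVopen, hVne, hVS, hVprop⟩ := ih
      by_cases hk : k < n
      · obtain ⟨V', hV'open, hV'ne, hV'V, hV'prop⟩ :=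
          𝒢.step_lemma U hU (B ⟨k, hk⟩) (hB ⟨k, hk⟩).1 (hB ⟨k, hk⟩).2.1
            (hB ⟨k, hk⟩).2.2.1 V hVopen (fun y hy => (hVS hy).1)
            (fun y hy => mem_iInter.mp (hVS hy).2 ⟨k, hk⟩)
        refine ⟨V', hV'open, hV'ne hVne, hV'V.trans hVS, ?_⟩
        intro y hy i hi β hβ hβs
        rcases Nat.lt_succ_iff_lt_or_eq.mp hi with h | h
        · exact hVprop y (hV'V hy) i h β hβ hβs
        · have : i = ⟨k, hk⟩ := Fin.ext h
          subst this
          exact hV'prop y hy β hβ hβs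
      · refine ⟨V, hVopen, hVne, hVS, ?_⟩
        intro y hy i _ β hβ hβs
        exact hVprop y hy i (lt_of_lt_of_le i.isLt (Nat.not_lt.mp hk)) β hβ hβs
  obtain ⟨V, _, ⟨y, hy⟩, hVS, hVprop⟩ := key n
  refine ⟨y, (hU (hVS hy).1).1, ?_, ?_⟩
  · intro i
    obtain ⟨β, hβ, hβs⟩ := mem_iInter.mp (hVS hy).2 i
    exact ⟨β, hβ, hβs⟩
  · intro i β hβ hβs
    exact hVprop y hy i i.isLt β hβ hβs
end
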